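/- arXiv:2402.15878 — 2 statements merged into one kernel-verified Lean document; each statement's English description precedes it below -/
import Mathlib

section
/- For real ν > −1, real α with |α| < s, and s > 0, the Laplace transform ∫₀^∞ e^{−s x} I_ν(α x) dx equals (1/√(s² − α²)) · ((s − √(s² − α²))/α)^ν. -/
/-- The modified Bessel function of the first kind of real order `ν`:
`I_ν(x) = Σ_{m ≥ 0} (x/2)^(2m+ν) / (m! Γ(m+ν+1))` (with real powers). -/
noncomputable def besselIr (ν : ℝ) (x : ℝ) : ℝ :=
  ∑' m : ℕ, (x / 2) ^ (2 * (m : ℝ) + ν) /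
    ((Nat.factorial m : ℝ) * Real.Gamma ((m : ℝ) + ν + 1))

open Real MeasureTheory

namespace BesselAux

open Filter Topology Set

noncomputable def cc (ν : ℝ) (m : ℕ) : ℝ :=
  Real.Gamma (2 * (m : ℝ) + ν + 1) / ((Nat.factorial m : ℝ) * Real.Gamma ((m : ℝ) + ν + 1))

lemma arg1_pos {ν : ℝ} (hν : -1 < ν) (m : ℕ) : (0:ℝ) < 2 * (m : ℝ) + ν + 1 := by
  have : (0:ℝ) ≤ (m:ℝ) := Nat.cast_nonneg m
  linarith

lemma arg2_pos {ν : ℝ} (hν : -1 < ν) (m : ℕ) : (0:ℝ) < (m : ℝ) + ν + 1 := by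
  have : (0:ℝ) ≤ (m:ℝ) := Nat.cast_nonneg m
  linarith

lemma cc_pos {ν : ℝ} (hν : -1 < ν) (m : ℕ) : 0 < cc ν m := by
  have h1 := Real.Gamma_pos_of_pos (arg1_pos hν m)
  have h2 := Real.Gamma_pos_of_pos (arg2_pos hν m)
  have h3 : (0:ℝ) < (Nat.factorial m : ℝ) := by positivity
  exact div_pos h1 (by positivity)

lemma cc_rec {ν : ℝ} (hν : -1 < ν) (m : ℕ) :
    ((m:ℝ) + 1) * ((m:ℝ) + ν + 1) * cc ν (m + 1)
      = (2 * (m:ℝ) + ν + 1) * (2 * (m:ℝ) + ν + 2) * cc ν m := by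
  have h2 : Real.Gamma ((m:ℝ) + ν + 1) ≠ 0 := (Real.Gamma_pos_of_pos (arg2_pos hν m)).ne'
  have h3 : ((Nat.factorial m : ℕ) : ℝ) ≠ 0 := by positivity
  have h4 : ((m:ℝ) + ν + 1) ≠ 0 := (arg2_pos hν m).ne'
  have h5 : ((m:ℝ) + 1) ≠ 0 := by positivity
  have e1 : Real.Gamma (2 * ((m:ℝ) + 1) + ν + 1)
      = (2 * (m:ℝ) + ν + 2) * ((2 * (m:ℝ) + ν + 1) * Real.Gamma (2 * (m:ℝ) + ν + 1)) := by
    have a1 : (2 * ((m:ℝ) + 1) + ν + 1) = (2 * (m:ℝ) + ν + 2) + 1 := by ring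
    rw [a1, Real.Gamma_add_one (by nlinarith [arg1_pos hν m])]
    congr 1
    have a2 : (2 * (m:ℝ) + ν + 2) = (2 * (m:ℝ) + ν + 1) + 1 := by ring
    rw [a2, Real.Gamma_add_one (arg1_pos hν m).ne']
  have e2 : Real.Gamma (((m:ℕ):ℝ) + 1 + ν + 1) = ((m:ℝ) + ν + 1) * Real.Gamma ((m:ℝ) + ν + 1) := by
    have a2 : ((m:ℝ) + 1 + ν + 1) = ((m:ℝ) + ν + 1) + 1 := by ring
    rw [a2, Real.Gamma_add_one (arg2_pos hν m).ne']
  unfold cc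
  rw [Nat.factorial_succ]
  push_cast
  rw [e1, e2]
  field_simp


lemma ratio_tendsto {ν : ℝ} (hν : -1 < ν) :
    Tendsto (fun m : ℕ => cc ν (m+1) / cc ν m) atTop (𝓝 4) := by
  have key : ∀ m : ℕ, cc ν (m+1) / cc ν m
      = ((2*(m:ℝ)+ν+1) * (2*(m:ℝ)+ν+2)) / (((m:ℝ)+1) * ((m:ℝ)+ν+1)) := by
    intro m
    have h := cc_rec hν m
    have h5 : ((m:ℝ) + 1) ≠ 0 := by positivity
    have h4 : ((m:ℝ) + ν + 1) ≠ 0 := (arg2_pos hν m).ne'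
    have hc : cc ν m ≠ 0 := (cc_pos hν m).ne'
    field_simp
    linarith [h]
  rw [tendsto_congr key]
  have key2 : ∀ᶠ m : ℕ in atTop, ((2*(m:ℝ)+ν+1) * (2*(m:ℝ)+ν+2)) / (((m:ℝ)+1) * ((m:ℝ)+ν+1))
      = ((2+(ν+1)*(m:ℝ)⁻¹) * (2+(ν+2)*(m:ℝ)⁻¹)) / ((1+(m:ℝ)⁻¹) * (1+(ν+1)*(m:ℝ)⁻¹)) := by
    filter_upwards [eventually_gt_atTop 0] with m hm
    have hm' : ((m:ℝ)) ≠ 0 := by positivity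
    have h5 : ((m:ℝ) + 1) ≠ 0 := by positivity
    have h4 : ((m:ℝ) + ν + 1) ≠ 0 := (arg2_pos hν m).ne'
    rw [div_eq_div_iff (mul_ne_zero h5 h4) (by
      have e1 : (1+(m:ℝ)⁻¹) * (1+(ν+1)*(m:ℝ)⁻¹) = (((m:ℝ)+1) * ((m:ℝ)+ν+1)) / (m:ℝ)^2 := by
        field_simp; ring
      rw [e1]
      positivity)]
    field_simp
    ring
  refine Tendsto.congr' (EventuallyEq.symm key2) ?_
  have hz : Tendsto (fun m : ℕ => ((m:ℝ))⁻¹) atTop (𝓝 0) := by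
    simpa [one_div] using (tendsto_one_div_atTop_nhds_zero_nat (𝕜 := ℝ))
  have hz1 : Tendsto (fun m : ℕ => (ν+1)*(m:ℝ)⁻¹) atTop (𝓝 0) := by
    simpa using hz.const_mul (ν+1)
  have hz2 : Tendsto (fun m : ℕ => (ν+2)*(m:ℝ)⁻¹) atTop (𝓝 0) := by
    simpa using hz.const_mul (ν+2)
  have hnum : Tendsto (fun m : ℕ => (2+(ν+1)*(m:ℝ)⁻¹) * (2+(ν+2)*(m:ℝ)⁻¹)) atTop (𝓝 4) := by
    have := ((tendsto_const_nhds (x := (2:ℝ))).add hz1).mul ((tendsto_const_nhds (x := (2:ℝ))).add hz2)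
    norm_num at this
    exact this
  have hden : Tendsto (fun m : ℕ => (1+(m:ℝ)⁻¹) * (1+(ν+1)*(m:ℝ)⁻¹)) atTop (𝓝 1) := by
    have := ((tendsto_const_nhds (x := (1:ℝ))).add hz).mul ((tendsto_const_nhds (x := (1:ℝ))).add hz1)
    norm_num at this
    exact this
  have h := hnum.div hden (one_ne_zero)
  have h2 : Tendsto (fun m : ℕ => (2+(ν+1)*(m:ℝ)⁻¹) * (2+(ν+2)*(m:ℝ)⁻¹) / ((1+(m:ℝ)⁻¹) * (1+(ν+1)*(m:ℝ)⁻¹))) atTop (𝓝 (4/1)) := h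
  norm_num at h2
  exact h2

lemma summable_cc_rho {ν : ℝ} (hν : -1 < ν) {ρ : ℝ} (h0 : 0 < ρ) (h4 : ρ < 1/4) :
    Summable (fun m => cc ν m * ρ^m) := by
  apply summable_of_ratio_test_tendsto_lt_one (l := 4*ρ) (by linarith)
  · filter_upwards with m
    exact (mul_pos (cc_pos hν m) (pow_pos h0 m)).ne'
  · have key : ∀ m : ℕ, ‖cc ν (m+1) * ρ^(m+1)‖ / ‖cc ν m * ρ^m‖ = (cc ν (m+1) / cc ν m) * ρ := by
      intro m
      rw [Real.norm_eq_abs, Real.norm_eq_abs, abs_of_pos (mul_pos (cc_pos hν _) (pow_pos h0 _)),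
        abs_of_pos (mul_pos (cc_pos hν _) (pow_pos h0 _)), pow_succ]
      have h1 := (cc_pos hν m).ne'
      have h2 := (pow_pos h0 m).ne'
      field_simp
    simp_rw [key]
    simpa [mul_comm] using (ratio_tendsto hν).mul_const ρ

lemma summable_master {ν : ℝ} (hν : -1 < ν) (j : ℕ) {z : ℝ} (hz : |z| < 1/4) :
    Summable (fun m : ℕ => ((m:ℝ)+2)^3 * cc ν (m+j) * |z|^m) := by
  set ρ : ℝ := 1/8 + |z|/2 with hρ
  have hz0 : 0 ≤ |z| := abs_nonneg z
  have hρ0 : 0 < ρ := by rw [hρ]; positivity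
  have hρ4 : ρ < 1/4 := by rw [hρ]; linarith
  have hzρ : |z| < ρ := by rw [hρ]; linarith
  have hsum := summable_cc_rho hν hρ0 hρ4
  set C : ℝ := ∑' m, cc ν m * ρ^m with hC
  have hbound : ∀ m, cc ν m * ρ^m ≤ C := by
    intro m
    exact Summable.le_tsum hsum m (fun j _ => le_of_lt (mul_pos (cc_pos hν j) (pow_pos hρ0 j)))
  set q : ℝ := |z|/ρ with hq
  have hq0 : 0 ≤ q := by positivity
  have hq1 : q < 1 := by rw [hq, div_lt_one hρ0]; exact hzρ
  have key : ∀ m : ℕ, ((m:ℝ)+2)^3 * cc ν (m+j) * |z|^m ≤ (C/ρ^j) * (((m:ℝ)+2)^3 * q^m) := by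
    intro m
    have h2 : cc ν (m+j) ≤ C / ρ^(m+j) := by
      rw [le_div_iff₀ (pow_pos hρ0 _)]; exact hbound (m+j)
    have h3 : ((m:ℝ)+2)^3 * cc ν (m+j) * |z|^m ≤ ((m:ℝ)+2)^3 * (C / ρ^(m+j)) * |z|^m := by
      apply mul_le_mul_of_nonneg_right _ (pow_nonneg hz0 m)
      exact mul_le_mul_of_nonneg_left h2 (by positivity)
    refine h3.trans (le_of_eq ?_)
    rw [pow_add, hq, div_pow]
    field_simp
  apply Summable.of_nonneg_of_le _ key
  · apply Summable.mul_left
    have hqn : ‖q‖ < 1 := by rwa [Real.norm_eq_abs, abs_of_nonneg hq0]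
    have t3 := summable_pow_mul_geometric_of_norm_lt_one (R := ℝ) 3 hqn
    have t2 := summable_pow_mul_geometric_of_norm_lt_one (R := ℝ) 2 hqn
    have t1 := summable_pow_mul_geometric_of_norm_lt_one (R := ℝ) 1 hqn
    have t0 := summable_pow_mul_geometric_of_norm_lt_one (R := ℝ) 0 hqn
    have := ((t3.add (t2.mul_left 6)).add (t1.mul_left 12)).add (t0.mul_left 8)
    apply this.congr
    intro m
    push_cast
    ring
  · intro m
    have := cc_pos hν (m+j)
    positivity


lemma hasDerivAt_tsum_pow {a : ℕ → ℝ} {r : ℝ} 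
    (hb : Summable (fun m : ℕ => ((m:ℝ)+1) * |a m| * r^m)) {z : ℝ} (hz : |z| < r) :
    HasDerivAt (fun y : ℝ => ∑' m : ℕ, a m * y^m) (∑' m : ℕ, ((m:ℝ)+1) * a (m+1) * z^m) z := by
  have hr0 : 0 < r := lt_of_le_of_lt (abs_nonneg z) hz
  set s : Set ℝ := Set.Ioo (-r) r with hs
  have hzs : z ∈ s := by
    constructor <;> [linarith [neg_abs_le z]; linarith [le_abs_self z]]
  have hyr : ∀ y ∈ s, |y| ≤ r := fun y hy => abs_le.2 ⟨hy.1.le, hy.2.le⟩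
  -- summability of the series at each point
  have hsum : ∀ y ∈ s, Summable (fun m : ℕ => a m * y^m) := by
    intro y hy
    apply Summable.of_norm_bounded hb
    intro m
    rw [norm_mul, Real.norm_eq_abs, Real.norm_eq_abs, abs_pow]
    calc |a m| * |y|^m ≤ |a m| * r^m := by
          apply mul_le_mul_of_nonneg_left (pow_le_pow_left₀ (abs_nonneg y) (hyr y hy) m) (abs_nonneg _)
      _ ≤ ((m:ℝ)+1) * |a m| * r^m := by
          have hm0 : (0:ℝ) ≤ (m:ℝ) := Nat.cast_nonneg m
          nlinarith [mul_nonneg (abs_nonneg (a m)) (pow_nonneg hr0.le m)]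
  -- derivative summability at z, and uniform bound
  have hders : ∀ y ∈ s, Summable (fun m : ℕ => a m * ((m:ℝ) * y^(m-1))) := by
    intro y hy
    apply Summable.of_norm_bounded (g := fun m : ℕ => (((m:ℝ)+1) * |a m| * r^m) / r) (hb.div_const r)
    intro m
    rw [norm_mul, Real.norm_eq_abs, Real.norm_eq_abs, abs_mul, abs_pow]
    match m with
    | 0 => simp; positivity
    | (k+1) =>
      have h1 : |y|^(k+1-1) ≤ r^k := pow_le_pow_left₀ (abs_nonneg y) (hyr y hy) k
      have h2 : |((k+1:ℕ):ℝ)| = (k:ℝ)+1 := by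
        rw [abs_of_nonneg (by positivity)]; push_cast; ring
      rw [h2]
      have : ((k+1:ℕ):ℝ)+1 ≥ (k:ℝ)+1 := by push_cast; linarith
      have hrw : (((k+1:ℕ):ℝ)+1) * |a (k+1)| * r^(k+1) / r = (((k+1:ℕ):ℝ)+1) * |a (k+1)| * r^k := by
        rw [pow_succ]; field_simp
      rw [hrw]
      calc |a (k+1)| * (((k:ℝ)+1) * |y|^(k+1-1)) ≤ |a (k+1)| * (((k:ℝ)+1) * r^k) := by
            apply mul_le_mul_of_nonneg_left _ (abs_nonneg _)
            exact mul_le_mul_of_nonneg_left h1 (by positivity)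
        _ ≤ (((k+1:ℕ):ℝ)+1) * |a (k+1)| * r^k := by
            push_cast
            nlinarith [abs_nonneg (a (k+1)), pow_nonneg hr0.le k]
  haveI : (atTop : Filter (Finset ℕ)).NeBot := atTop_neBot
  have key : HasDerivAt (fun y : ℝ => ∑' m : ℕ, a m * y^m)
      (∑' m : ℕ, a m * ((m:ℝ) * z^(m-1))) z := by
    apply hasDerivAt_of_tendstoUniformlyOn (l := (atTop : Filter (Finset ℕ))) (f := fun (t : Finset ℕ) (y : ℝ) => ∑ m ∈ t, a m * y^m)
      (f' := fun (t : Finset ℕ) (y : ℝ) => ∑ m ∈ t, a m * ((m:ℝ) * y^(m-1)))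
      (isOpen_Ioo : IsOpen s) ?h1 ?h2 ?h3 hzs
    case h1 =>
      apply tendstoUniformlyOn_tsum (hb.div_const r)
      intro m y hy
      rw [norm_mul, Real.norm_eq_abs, Real.norm_eq_abs, abs_mul, abs_pow]
      match m with
      | 0 => simp; positivity
      | (k+1) =>
        have h1 : |y|^(k+1-1) ≤ r^k := pow_le_pow_left₀ (abs_nonneg y) (hyr y hy) k
        have h2 : |((k+1:ℕ):ℝ)| = (k:ℝ)+1 := by
          rw [abs_of_nonneg (by positivity)]; push_cast; ring
        rw [h2]
        have hrw : (((k+1:ℕ):ℝ)+1) * |a (k+1)| * r^(k+1) / r = (((k+1:ℕ):ℝ)+1) * |a (k+1)| * r^k := by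
          rw [pow_succ]; field_simp
        rw [hrw]
        calc |a (k+1)| * (((k:ℝ)+1) * |y|^(k+1-1)) ≤ |a (k+1)| * (((k:ℝ)+1) * r^k) := by
              apply mul_le_mul_of_nonneg_left _ (abs_nonneg _)
              exact mul_le_mul_of_nonneg_left h1 (by positivity)
          _ ≤ (((k+1:ℕ):ℝ)+1) * |a (k+1)| * r^k := by
              push_cast
              nlinarith [abs_nonneg (a (k+1)), pow_nonneg hr0.le k]
    case h2 =>
      filter_upwards with t y _
      apply HasDerivAt.fun_sum
      intro m _
      exact (hasDerivAt_pow m y).const_mul (a m)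
    case h3 =>
      intro y hy
      exact (hsum y hy).hasSum
  -- now rewrite the derivative series
  have hshift : (∑' m : ℕ, a m * ((m:ℝ) * z^(m-1))) = ∑' m : ℕ, ((m:ℝ)+1) * a (m+1) * z^m := by
    rw [Summable.tsum_eq_zero_add (hders z hzs)]
    simp only [Nat.cast_zero, zero_mul, mul_zero, pow_zero, zero_add]
    apply tsum_congr
    intro m
    push_cast
    ring
  rwa [hshift] at key


noncomputable def hh (ν : ℝ) (z : ℝ) : ℝ := ∑' m : ℕ, cc ν m * z^m
noncomputable def hD (ν : ℝ) (z : ℝ) : ℝ := ∑' m : ℕ, (((m:ℝ)+1) * cc ν (m+1)) * z^m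
noncomputable def hDD (ν : ℝ) (z : ℝ) : ℝ := ∑' m : ℕ, (((m:ℝ)+1) * ((m:ℝ)+2) * cc ν (m+2)) * z^m

lemma summable_poly {ν : ℝ} (hν : -1 < ν) (j : ℕ) {z : ℝ} (hz : |z| < 1/4) (P : ℕ → ℝ)
    (hP : ∀ m : ℕ, |P m| ≤ ((m:ℝ)+2)^3) :
    Summable (fun m : ℕ => (P m * cc ν (m+j)) * z^m) := by
  apply Summable.of_norm_bounded (summable_master hν j hz)
  intro m
  rw [norm_mul, norm_mul, Real.norm_eq_abs, Real.norm_eq_abs, Real.norm_eq_abs, abs_pow,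
    abs_of_pos (cc_pos hν (m+j))]
  apply mul_le_mul_of_nonneg_right _ (pow_nonneg (abs_nonneg z) m)
  exact mul_le_mul_of_nonneg_right (hP m) (cc_pos hν (m+j)).le

lemma cube_expand (x : ℝ) : (x+2)^3 = x^3+6*x^2+12*x+8 := by ring

lemma cube_ge_one (m : ℕ) : (1:ℝ) ≤ ((m:ℝ)+2)^3 := by
  have h0 : (0:ℝ) ≤ (m:ℝ) := Nat.cast_nonneg m
  rw [cube_expand]
  nlinarith [pow_nonneg h0 3, pow_nonneg h0 2]

lemma cube_ge_m1 (m : ℕ) : ((m:ℝ)+1) ≤ ((m:ℝ)+2)^3 := by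
  have h0 : (0:ℝ) ≤ (m:ℝ) := Nat.cast_nonneg m
  rw [cube_expand]
  nlinarith [pow_nonneg h0 3, pow_nonneg h0 2]

lemma cube_ge_m1m2 (m : ℕ) : ((m:ℝ)+1)*((m:ℝ)+2) ≤ ((m:ℝ)+2)^3 := by
  have h0 : (0:ℝ) ≤ (m:ℝ) := Nat.cast_nonneg m
  rw [cube_expand]
  nlinarith [pow_nonneg h0 3, pow_nonneg h0 2]

lemma cube_ge_sq (m : ℕ) : ((m:ℝ)+1)^2 ≤ ((m:ℝ)+2)^3 := by
  have h0 : (0:ℝ) ≤ (m:ℝ) := Nat.cast_nonneg m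
  rw [cube_expand]
  nlinarith [pow_nonneg h0 3, pow_nonneg h0 2]

lemma mul_le3 {A B c r : ℝ} (h : A ≤ B) (hc : 0 ≤ c) (hr : 0 ≤ r) : A*c*r ≤ B*c*r :=
  mul_le_mul_of_nonneg_right (mul_le_mul_of_nonneg_right h hc) hr

lemma summable_F0 {ν : ℝ} (hν : -1 < ν) {z : ℝ} (hz : |z| < 1/4) :
    Summable (fun m : ℕ => cc ν m * z^m) := by
  have := summable_poly hν 0 hz (fun _ => 1) (by
    intro m; rw [abs_one]; exact cube_ge_one m)
  simpa using this

lemma summable_F1 {ν : ℝ} (hν : -1 < ν) {z : ℝ} (hz : |z| < 1/4) :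
    Summable (fun m : ℕ => (((m:ℝ)+1) * cc ν (m+1)) * z^m) :=
  summable_poly hν 1 hz (fun m => (m:ℝ)+1) (by
    intro m
    rw [abs_of_nonneg (by positivity)]
    exact cube_ge_m1 m)

lemma summable_F2 {ν : ℝ} (hν : -1 < ν) {z : ℝ} (hz : |z| < 1/4) :
    Summable (fun m : ℕ => (((m:ℝ)+1) * ((m:ℝ)+2) * cc ν (m+2)) * z^m) :=
  summable_poly hν 2 hz (fun m => ((m:ℝ)+1)*((m:ℝ)+2)) (by
    intro m
    rw [abs_of_nonneg (by positivity)]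
    exact cube_ge_m1m2 m)

lemma summable_G1 {ν : ℝ} (hν : -1 < ν) {z : ℝ} (hz : |z| < 1/4) :
    Summable (fun m : ℕ => ((m:ℝ) * ((m:ℝ)+1) * cc ν (m+1)) * z^m) :=
  summable_poly hν 1 hz (fun m => (m:ℝ)*((m:ℝ)+1)) (by
    intro m
    have h0 : (0:ℝ) ≤ (m:ℝ) := Nat.cast_nonneg m
    rw [abs_of_nonneg (by positivity), cube_expand]
    nlinarith [pow_nonneg h0 3, pow_nonneg h0 2])

lemma summable_G2 {ν : ℝ} (hν : -1 < ν) {z : ℝ} (hz : |z| < 1/4) :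
    Summable (fun m : ℕ => ((m:ℝ) * ((m:ℝ)-1) * cc ν m) * z^m) :=
  summable_poly hν 0 hz (fun m => (m:ℝ)*((m:ℝ)-1)) (by
    intro m
    have h0 : (0:ℝ) ≤ (m:ℝ) := Nat.cast_nonneg m
    match m with
    | 0 => norm_num
    | (k+1) =>
      have h0 : (0:ℝ) ≤ (k:ℝ) := Nat.cast_nonneg k
      push_cast
      rw [abs_of_nonneg (by nlinarith), cube_expand]
      nlinarith [pow_nonneg h0 3, pow_nonneg h0 2])

lemma summable_G3 {ν : ℝ} (hν : -1 < ν) {z : ℝ} (hz : |z| < 1/4) :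
    Summable (fun m : ℕ => ((m:ℝ) * cc ν m) * z^m) :=
  summable_poly hν 0 hz (fun m => (m:ℝ)) (by
    intro m
    have h0 : (0:ℝ) ≤ (m:ℝ) := Nat.cast_nonneg m
    rw [abs_of_nonneg h0, cube_expand]
    nlinarith [pow_nonneg h0 3, pow_nonneg h0 2])

lemma hasDerivAt_hh {ν : ℝ} (hν : -1 < ν) {z : ℝ} (hz : |z| < 1/4) :
    HasDerivAt (hh ν) (hD ν z) z := by
  set r : ℝ := 1/8 + |z|/2 with hr
  have h1 : |z| < r := by rw [hr]; linarith [abs_nonneg z]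
  have h2 : |r| < 1/4 := by
    rw [hr, abs_of_nonneg (by positivity)]; linarith
  have hb : Summable (fun m : ℕ => ((m:ℝ)+1) * |cc ν m| * r^m) := by
    apply Summable.of_nonneg_of_le _ _ (summable_master hν 0 h2)
    · intro m; positivity
    · intro m
      rw [abs_of_pos (cc_pos hν m), abs_of_nonneg (by positivity : (0:ℝ) ≤ r)]
      have e : m + 0 = m := rfl
      rw [e]
      exact mul_le3 (cube_ge_m1 m) (cc_pos hν m).le (by positivity)
  have key := hasDerivAt_tsum_pow hb h1
  have e : (∑' m : ℕ, ((m:ℝ)+1) * cc ν (m+1) * z^m) = hD ν z := by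
    unfold hD; apply tsum_congr; intro m; ring
  rw [e] at key
  exact key

lemma hasDerivAt_hD {ν : ℝ} (hν : -1 < ν) {z : ℝ} (hz : |z| < 1/4) :
    HasDerivAt (hD ν) (hDD ν z) z := by
  set r : ℝ := 1/8 + |z|/2 with hr
  have h1 : |z| < r := by rw [hr]; linarith [abs_nonneg z]
  have h2 : |r| < 1/4 := by
    rw [hr, abs_of_nonneg (by positivity)]; linarith
  have hb : Summable (fun m : ℕ => ((m:ℝ)+1) * |((m:ℝ)+1) * cc ν (m+1)| * r^m) := by
    apply Summable.of_nonneg_of_le _ _ (summable_master hν 1 h2)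
    · intro m; positivity
    · intro m
      rw [abs_of_pos (mul_pos (by positivity) (cc_pos hν (m+1))), abs_of_nonneg (by positivity : (0:ℝ) ≤ r)]
      have e : ((m:ℝ)+1) * (((m:ℝ)+1) * cc ν (m+1)) * r^m = ((m:ℝ)+1)^2 * cc ν (m+1) * r^m := by ring
      rw [e]
      exact mul_le3 (cube_ge_sq m) (cc_pos hν (m+1)).le (by positivity)
  have key := hasDerivAt_tsum_pow hb h1
  have e : (∑' m : ℕ, ((m:ℝ)+1) * ((((m+1:ℕ):ℝ)+1) * cc ν ((m+1)+1)) * z^m) = hDD ν z := by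
    unfold hDD
    apply tsum_congr; intro m
    have : m+1+1 = m+2 := rfl
    rw [this]
    push_cast
    ring
  rw [e] at key
  exact key

lemma shift1 {z : ℝ} {g : ℕ → ℝ} (h0 : g 0 = 0) (hs : Summable (fun m : ℕ => g m * z^m)) :
    ∑' m : ℕ, g m * z^m = z * ∑' m : ℕ, g (m+1) * z^m := by
  rw [Summable.tsum_eq_zero_add hs, h0, zero_mul, zero_add, ← tsum_mul_left]
  apply tsum_congr; intro m; rw [pow_succ]; ring

lemma h_ode {ν : ℝ} (hν : -1 < ν) {z : ℝ} (hz : |z| < 1/4) :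
    z*(1-4*z)*hDD ν z + ((ν+1)-(4*ν+10)*z)*hD ν z - (ν+1)*(ν+2)*hh ν z = 0 := by
  have e1 : (∑' m : ℕ, ((m:ℝ) * ((m:ℝ)+1) * cc ν (m+1)) * z^m) = z * hDD ν z := by
    rw [shift1 (by norm_num) (summable_G1 hν hz)]
    congr 1
    unfold hDD
    apply tsum_congr; intro m
    have : m+1+1 = m+2 := rfl
    push_cast [this]
    ring
  have e2 : (∑' m : ℕ, ((m:ℝ) * ((m:ℝ)-1) * cc ν m) * z^m)
      = z * (∑' m : ℕ, ((m:ℝ) * ((m:ℝ)+1) * cc ν (m+1)) * z^m) := by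
    rw [shift1 (by norm_num) (summable_G2 hν hz)]
    congr 1
    apply tsum_congr; intro m
    push_cast
    ring
  have e3 : (∑' m : ℕ, ((m:ℝ) * cc ν m) * z^m) = z * hD ν z := by
    rw [shift1 (by norm_num) (summable_G3 hν hz)]
    congr 1
    unfold hD
    apply tsum_congr; intro m
    push_cast
    ring
  have lhs_eq : z*(1-4*z)*hDD ν z + ((ν+1)-(4*ν+10)*z)*hD ν z - (ν+1)*(ν+2)*hh ν z
      = (∑' m : ℕ, ((m:ℝ) * ((m:ℝ)+1) * cc ν (m+1)) * z^m)
        - 4 * (∑' m : ℕ, ((m:ℝ) * ((m:ℝ)-1) * cc ν m) * z^m)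
        + (ν+1) * hD ν z
        - (4*ν+10) * (∑' m : ℕ, ((m:ℝ) * cc ν m) * z^m)
        - (ν+1)*(ν+2) * hh ν z := by
    rw [e1, e2, e3, e1]
    ring
  rw [lhs_eq]
  unfold hh hD
  rw [← tsum_mul_left (a := (ν+1)), ← tsum_mul_left (a := (4*ν+10)), ← tsum_mul_left (a := (ν+1)*(ν+2)),
    ← tsum_mul_left (a := (4:ℝ))]
  rw [← Summable.tsum_sub (summable_G1 hν hz) ((summable_G2 hν hz).mul_left 4),
    ← Summable.tsum_add (((summable_G1 hν hz)).sub ((summable_G2 hν hz).mul_left 4)) ((summable_F1 hν hz).mul_left (ν+1)),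
    ← Summable.tsum_sub ((((summable_G1 hν hz)).sub ((summable_G2 hν hz).mul_left 4)).add ((summable_F1 hν hz).mul_left (ν+1)))
      ((summable_G3 hν hz).mul_left (4*ν+10)),
    ← Summable.tsum_sub (((((summable_G1 hν hz)).sub ((summable_G2 hν hz).mul_left 4)).add ((summable_F1 hν hz).mul_left (ν+1))).sub
      ((summable_G3 hν hz).mul_left (4*ν+10))) ((summable_F0 hν hz).mul_left ((ν+1)*(ν+2)))]
  have hterm : ∀ m : ℕ,
      ((m:ℝ) * ((m:ℝ)+1) * cc ν (m+1)) * z^m - 4 * (((m:ℝ) * ((m:ℝ)-1) * cc ν m) * z^m)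
        + (ν+1) * ((((m:ℝ)+1) * cc ν (m+1)) * z^m)
        - (4*ν+10) * (((m:ℝ) * cc ν m) * z^m)
        - (ν+1)*(ν+2) * (cc ν m * z^m) = 0 := by
    intro m
    linear_combination (z^m) * (cc_rec hν m)
  calc (∑' m : ℕ, (((m:ℝ) * ((m:ℝ)+1) * cc ν (m+1)) * z^m - 4 * (((m:ℝ) * ((m:ℝ)-1) * cc ν m) * z^m)
        + (ν+1) * ((((m:ℝ)+1) * cc ν (m+1)) * z^m)
        - (4*ν+10) * (((m:ℝ) * cc ν m) * z^m)
        - (ν+1)*(ν+2) * (cc ν m * z^m)))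
      = ∑' (m : ℕ), (0:ℝ) := by
        apply tsum_congr; intro m; rw [hterm m]
    _ = 0 := tsum_zero


noncomputable def uu (z : ℝ) : ℝ := Real.sqrt (1-4*z)
noncomputable def vv (z : ℝ) : ℝ := 2/(1+uu z)
noncomputable def gg (ν : ℝ) (z : ℝ) : ℝ := (uu z)⁻¹ * (vv z)^ν
noncomputable def g1 (ν : ℝ) (z : ℝ) : ℝ := (vv z)^ν * (2 + ν*(uu z)*(vv z)) / (uu z)^3
noncomputable def g2 (ν : ℝ) (z : ℝ) : ℝ :=
  (vv z)^ν * (ν*(ν+1)*(uu z)^2*(vv z)^2 + 6*ν*(uu z)*(vv z) + 12) / (uu z)^5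

lemma uu_pos {z : ℝ} (hz : z < 1/4) : 0 < uu z := Real.sqrt_pos.2 (by linarith)
lemma uu_nonneg (z : ℝ) : 0 ≤ uu z := Real.sqrt_nonneg _
lemma uu_sq {z : ℝ} (hz : z < 1/4) : (uu z)^2 = 1-4*z := Real.sq_sqrt (by linarith)
lemma one_add_uu_pos (z : ℝ) : 0 < 1 + uu z := by linarith [uu_nonneg z]
lemma vv_pos (z : ℝ) : 0 < vv z := div_pos two_pos (one_add_uu_pos z)
lemma gg_pos {ν : ℝ} {z : ℝ} (hz : z < 1/4) : 0 < gg ν z :=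
  mul_pos (inv_pos.2 (uu_pos hz)) (Real.rpow_pos_of_pos (vv_pos z) ν)

lemma hasDerivAt_uu {z : ℝ} (hz : z < 1/4) : HasDerivAt uu (-2 / uu z) z := by
  have h1 : (1-4*z) ≠ 0 := by linarith
  have inner : HasDerivAt (fun z : ℝ => 1-4*z) (-4) z := by
    simpa using ((hasDerivAt_id z).const_mul 4).const_sub 1
  have := (Real.hasDerivAt_sqrt h1).comp z inner
  refine this.congr_deriv ?_
  unfold uu
  field_simp
  ring

lemma hasDerivAt_vv {z : ℝ} (hz : z < 1/4) : HasDerivAt vv (4 / (uu z * (1+uu z)^2)) z := by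
  have h2 : (1 + uu z) ≠ 0 := (one_add_uu_pos z).ne'
  have := (((hasDerivAt_uu hz).const_add 1).inv h2).const_mul 2
  refine this.congr_deriv ?_
  have hu : uu z ≠ 0 := (uu_pos hz).ne'
  field_simp
  ring

lemma hasDerivAt_vpow {ν : ℝ} {z : ℝ} (hz : z < 1/4) :
    HasDerivAt (fun z => (vv z)^ν) (2*ν*((vv z)^ν)/(uu z*(1+uu z))) z := by
  have hv : vv z ≠ 0 := (vv_pos z).ne'
  have := (Real.hasDerivAt_rpow_const (p := ν) (Or.inl hv)).comp z (hasDerivAt_vv hz)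
  refine this.congr_deriv ?_
  have hrw : (vv z)^(ν-1) = (vv z)^ν / vv z := by
    rw [Real.rpow_sub (vv_pos z) ν 1, Real.rpow_one]
  rw [hrw]
  have hu : uu z ≠ 0 := (uu_pos hz).ne'
  have h2 : (1 + uu z) ≠ 0 := (one_add_uu_pos z).ne'
  unfold vv
  field_simp
  ring

lemma hasDerivAt_gg {ν : ℝ} {z : ℝ} (hz : z < 1/4) : HasDerivAt (gg ν) (g1 ν z) z := by
  have hu : uu z ≠ 0 := (uu_pos hz).ne'
  have h2 : (1 + uu z) ≠ 0 := (one_add_uu_pos z).ne'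
  have := ((hasDerivAt_uu hz).inv hu).mul (hasDerivAt_vpow (ν := ν) hz)
  refine this.congr_deriv ?_
  simp only [Pi.inv_apply]
  unfold g1 vv
  field_simp

lemma hasDerivAt_g1 {ν : ℝ} {z : ℝ} (hz : z < 1/4) : HasDerivAt (g1 ν) (g2 ν z) z := by
  have hu : uu z ≠ 0 := (uu_pos hz).ne'
  have h2 : (1 + uu z) ≠ 0 := (one_add_uu_pos z).ne'
  have hnum : HasDerivAt (fun z => (vv z)^ν * (2 + ν*(uu z)*(vv z)))
      ((2*ν*((vv z)^ν)/(uu z*(1+uu z))) * (2 + ν*(uu z)*(vv z))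
        + (vv z)^ν * (ν * ((-2/uu z) * vv z + uu z * (4/(uu z*(1+uu z)^2))))) z := by
    have hd : HasDerivAt (fun z => 2 + ν*(uu z)*(vv z))
        (ν * ((-2/uu z) * vv z + uu z * (4/(uu z*(1+uu z)^2)))) z := by
      have h := (((hasDerivAt_uu hz).mul (hasDerivAt_vv hz)).const_mul ν).const_add 2
      have heq : (fun z => 2 + ν*(uu z)*(vv z)) = (fun x => 2 + ν * (uu x * vv x)) := by
        funext x; ring
      rw [heq]
      exact h
    exact (hasDerivAt_vpow hz).mul hd
  have hden : HasDerivAt (fun z => (uu z)^3) (3 * (uu z)^2 * (-2/uu z)) z :=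
    (hasDerivAt_uu hz).pow 3
  have := hnum.div hden (pow_ne_zero 3 hu)
  refine this.congr_deriv ?_
  unfold g2 vv
  field_simp
  ring

lemma g_ode {ν : ℝ} {z : ℝ} (hz : z < 1/4) :
    z*(1-4*z)*g2 ν z + ((ν+1)-(4*ν+10)*z)*g1 ν z - (ν+1)*(ν+2)*gg ν z = 0 := by
  have hu : uu z ≠ 0 := (uu_pos hz).ne'
  have h2 : (1 + uu z) ≠ 0 := (one_add_uu_pos z).ne'
  rw [g2, g1, gg]
  unfold vv
  set u := uu z with huu
  have hu0 : u ≠ 0 := hu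
  have h12 : (1:ℝ) + u ≠ 0 := h2
  have hz4 : z = (1-u^2)/4 := by
    have := uu_sq hz; rw [← huu] at this; linarith
  rw [hz4]
  field_simp
  ring


-- values at 0
lemma cc_zero {ν : ℝ} (hν : -1 < ν) : cc ν 0 = 1 := by
  unfold cc
  norm_num
  rw [add_comm (ν:ℝ) 1] at *
  exact (Real.Gamma_pos_of_pos (by linarith)).ne'

lemma cc_one {ν : ℝ} (hν : -1 < ν) : cc ν 1 = ν + 2 := by
  unfold cc
  norm_num
  have e1 : (2:ℝ) + ν + 1 = (ν + 2) + 1 := by ring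
  have e2 : (1:ℝ) + ν + 1 = ν + 2 := by ring
  rw [e1, e2, Real.Gamma_add_one (by linarith)]
  rw [mul_div_assoc, div_self (Real.Gamma_pos_of_pos (by linarith)).ne', mul_one]

lemma hh_zero {ν : ℝ} (hν : -1 < ν) : hh ν 0 = 1 := by
  unfold hh
  rw [tsum_eq_single 0 (fun m hm => by simp [zero_pow hm])]
  simpa using cc_zero hν

lemma hD_zero {ν : ℝ} (hν : -1 < ν) : hD ν 0 = ν + 2 := by
  unfold hD
  rw [tsum_eq_single 0 (fun m hm => by simp [zero_pow hm])]
  simpa using cc_one hν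

lemma uu_zero : uu 0 = 1 := by unfold uu; norm_num
lemma vv_zero : vv 0 = 1 := by unfold vv; rw [uu_zero]; norm_num
lemma gg_zero (ν : ℝ) : gg ν 0 = 1 := by unfold gg; rw [uu_zero, vv_zero]; simp
lemma g1_zero (ν : ℝ) : g1 ν 0 = ν + 2 := by
  unfold g1; rw [uu_zero, vv_zero]; simp; ring

noncomputable def WW (ν : ℝ) (z : ℝ) : ℝ := hh ν z * g1 ν z - gg ν z * hD ν z

lemma WW_zero {ν : ℝ} (hν : -1 < ν) : WW ν 0 = 0 := by
  unfold WW
  rw [hh_zero hν, hD_zero hν, gg_zero, g1_zero]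
  ring

lemma hasDerivAt_WW {ν : ℝ} (hν : -1 < ν) {z : ℝ} (hz : |z| < 1/4) :
    HasDerivAt (WW ν) (hh ν z * g2 ν z - gg ν z * hDD ν z) z := by
  have hz4 : z < 1/4 := lt_of_le_of_lt (le_abs_self z) hz
  have h := ((hasDerivAt_hh hν hz).mul (hasDerivAt_g1 (ν := ν) hz4)).sub
    ((hasDerivAt_gg (ν := ν) hz4).mul (hasDerivAt_hD hν hz))
  refine h.congr_deriv ?_
  ring

lemma W_ode {ν : ℝ} (hν : -1 < ν) {z : ℝ} (hz : |z| < 1/4) :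
    z*(1-4*z)*(hh ν z * g2 ν z - gg ν z * hDD ν z) + ((ν+1)-(4*ν+10)*z)*WW ν z = 0 := by
  have hz4 : z < 1/4 := lt_of_le_of_lt (le_abs_self z) hz
  have hg := g_ode (ν := ν) hz4
  have hho := h_ode hν hz
  unfold WW
  linear_combination hh ν z * hg - gg ν z * hho

noncomputable def EE (ν : ℝ) (z : ℝ) : ℝ := z^(ν+1) * (1-4*z)^((3:ℝ)/2)
noncomputable def EP (ν : ℝ) (z : ℝ) : ℝ :=
  (ν+1)*z^ν*(1-4*z)^((3:ℝ)/2) - 6*z^(ν+1)*(1-4*z)^((1:ℝ)/2)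

lemma hasDerivAt_EE {ν : ℝ} {z : ℝ} (h0 : 0 < z) (h4 : z < 1/4) :
    HasDerivAt (EE ν) (EP ν z) z := by
  have h14 : (0:ℝ) < 1-4*z := by linarith
  have f1 : HasDerivAt (fun x : ℝ => x^(ν+1)) ((ν+1)*z^ν) z := by
    have := Real.hasDerivAt_rpow_const (x := z) (p := ν+1) (Or.inl h0.ne')
    refine this.congr_deriv ?_
    norm_num
  have inner : HasDerivAt (fun z : ℝ => 1-4*z) (-4) z := by
    simpa using ((hasDerivAt_id z).const_mul 4).const_sub 1
  have f2 : HasDerivAt (fun x : ℝ => (1-4*x)^((3:ℝ)/2)) (-6*(1-4*z)^((1:ℝ)/2)) z := by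
    have := (Real.hasDerivAt_rpow_const (x := (1-4*z)) (p := (3:ℝ)/2) (Or.inl h14.ne')).comp z inner
    refine this.congr_deriv ?_
    have : (3:ℝ)/2 - 1 = 1/2 := by norm_num
    rw [this]
    ring
  have := f1.mul f2
  refine this.congr_deriv ?_
  unfold EP
  ring

lemma E_rel {ν : ℝ} {z : ℝ} (h0 : 0 < z) (h4 : z < 1/4) :
    z*(1-4*z)*EP ν z = ((ν+1)-(4*ν+10)*z)*EE ν z := by
  have h14 : (0:ℝ) < 1-4*z := by linarith
  unfold EP EE
  rw [Real.rpow_add_one h0.ne' ν]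
  rw [show (3:ℝ)/2 = 1/2 + 1 by norm_num, Real.rpow_add_one h14.ne' (1/2)]
  ring

lemma EE_pos {ν : ℝ} {z : ℝ} (h0 : 0 < z) (h4 : z < 1/4) : 0 < EE ν z := by
  have h14 : (0:ℝ) < 1-4*z := by linarith
  exact mul_pos (Real.rpow_pos_of_pos h0 _) (Real.rpow_pos_of_pos h14 _)

lemma hasDerivAt_k {ν : ℝ} (hν : -1 < ν) {z : ℝ} (h0 : 0 < z) (h4 : z < 1/4) :
    HasDerivAt (fun t => WW ν t * EE ν t) 0 z := by
  have habs : |z| < 1/4 := by rw [abs_of_pos h0]; exact h4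
  have h := (hasDerivAt_WW hν habs).mul (hasDerivAt_EE (ν := ν) h0 h4)
  have hq : z*(1-4*z) ≠ 0 := by
    have : (0:ℝ) < 1-4*z := by linarith
    positivity
  have hval : (hh ν z * g2 ν z - gg ν z * hDD ν z) * EE ν z + WW ν z * EP ν z = 0 := by
    have h1 := W_ode hν habs
    have h2 := E_rel (ν := ν) h0 h4
    have h3 : z*(1-4*z) * ((hh ν z * g2 ν z - gg ν z * hDD ν z) * EE ν z + WW ν z * EP ν z) = 0 := by
      linear_combination EE ν z * h1 + WW ν z * h2
    exact (mul_eq_zero.mp h3).resolve_left hq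
  rwa [hval] at h

lemma WW_eq_zero {ν : ℝ} (hν : -1 < ν) {b : ℝ} (h0 : 0 < b) (h4 : b < 1/4) :
    WW ν b = 0 := by
  set k : ℝ → ℝ := fun t => WW ν t * EE ν t with hk
  have hconst : ∀ ε, 0 < ε → ε ≤ b → k b = k ε := by
    intro ε hε hεb
    have hcont : ContinuousOn k (Icc ε b) := by
      intro x hx
      have hx0 : 0 < x := lt_of_lt_of_le hε hx.1
      have hx4 : x < 1/4 := lt_of_le_of_lt hx.2 h4
      exact (hasDerivAt_k hν hx0 hx4).continuousAt.continuousWithinAt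
    have hderiv : ∀ x ∈ Ico ε b, HasDerivWithinAt k 0 (Ici x) x := by
      intro x hx
      have hx0 : 0 < x := lt_of_lt_of_le hε hx.1
      have hx4 : x < 1/4 := lt_trans hx.2 h4
      exact (hasDerivAt_k hν hx0 hx4).hasDerivWithinAt
    exact constant_of_has_deriv_right_zero hcont hderiv b (right_mem_Icc.2 hεb)
  have hWcont : Tendsto (WW ν) (𝓝 0) (𝓝 (WW ν 0)) :=
    (hasDerivAt_WW hν (by norm_num : |(0:ℝ)| < 1/4)).continuousAt
  have hE1 : Tendsto (fun t : ℝ => t^(ν+1)) (𝓝 0) (𝓝 0) := by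
    have := Real.continuousAt_rpow_const 0 (ν+1) (Or.inr (by linarith))
    have h00 : (0:ℝ)^(ν+1) = 0 := Real.zero_rpow (by linarith)
    rw [ContinuousAt, h00] at this
    exact this
  have hE2 : Tendsto (fun t : ℝ => (1-4*t)^((3:ℝ)/2)) (𝓝 0) (𝓝 1) := by
    have hc : ContinuousAt (fun t : ℝ => (1-4*t)^((3:ℝ)/2)) 0 := by
      apply ContinuousAt.rpow_const
      · exact (continuous_const.sub (continuous_const.mul continuous_id)).continuousAt
      · left; norm_num
    rw [ContinuousAt] at hc
    norm_num at hc
    exact hc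
  have hEtend : Tendsto (EE ν) (𝓝 0) (𝓝 0) := by
    have := hE1.mul hE2
    rw [zero_mul] at this
    exact this
  have hklim : Tendsto k (𝓝[>] (0:ℝ)) (𝓝 0) := by
    have := hWcont.mul hEtend
    rw [mul_zero] at this
    exact (this.mono_left nhdsWithin_le_nhds)
  have hev : k =ᶠ[𝓝[>] (0:ℝ)] (fun _ => k b) := by
    filter_upwards [Ioc_mem_nhdsGT h0] with ε hε
    exact (hconst ε hε.1 hε.2).symm
  have hklim2 : Tendsto k (𝓝[>] (0:ℝ)) (𝓝 (k b)) :=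
    Tendsto.congr' hev.symm tendsto_const_nhds
  have hkb : k b = 0 := tendsto_nhds_unique hklim2 hklim
  have := (EE_pos (ν := ν) h0 h4).ne'
  rw [hk] at hkb
  simp only at hkb
  exact (mul_eq_zero.mp hkb).resolve_right this

lemma key_identity {ν : ℝ} (hν : -1 < ν) {z : ℝ} (h0 : 0 ≤ z) (h4 : z < 1/4) :
    hh ν z = gg ν z := by
  rcases eq_or_lt_of_le h0 with h | h
  · rw [← h, hh_zero hν, gg_zero]
  · set φ : ℝ → ℝ := fun t => hh ν t * (gg ν t)⁻¹ with hφ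
    have hd : ∀ x, 0 ≤ x → x < 1/4 → HasDerivAt φ 0 x := by
      intro x hx0 hx4
      have habs : |x| < 1/4 := by rw [abs_of_nonneg hx0]; exact hx4
      have hggne : gg ν x ≠ 0 := (gg_pos hx4).ne'
      have h := (hasDerivAt_hh hν habs).mul ((hasDerivAt_gg (ν := ν) hx4).inv hggne)
      have hW : WW ν x = 0 := by
        rcases eq_or_lt_of_le hx0 with h' | h'
        · rw [← h']; exact WW_zero hν
        · exact WW_eq_zero hν h' hx4
      have hval : hD ν x * (gg ν x)⁻¹ + hh ν x * (-g1 ν x / gg ν x ^ 2) = 0 := by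
        unfold WW at hW
        have e : hD ν x * (gg ν x)⁻¹ + hh ν x * (-g1 ν x / gg ν x ^ 2)
            = (gg ν x * hD ν x - hh ν x * g1 ν x)/(gg ν x)^2 := by
          field_simp
          ring
        rw [e, show gg ν x * hD ν x - hh ν x * g1 ν x = 0 from by linarith, zero_div]
      rwa [Pi.inv_apply, hval] at h
    have hcont : ContinuousOn φ (Icc 0 z) := by
      intro x hx
      exact (hd x hx.1 (lt_of_le_of_lt hx.2 h4)).continuousAt.continuousWithinAt
    have hderiv : ∀ x ∈ Ico 0 z, HasDerivWithinAt φ 0 (Ici x) x := by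
      intro x hx
      exact (hd x hx.1 (lt_of_lt_of_le hx.2 h4.le)).hasDerivWithinAt
    have := constant_of_has_deriv_right_zero hcont hderiv z (right_mem_Icc.2 h.le)
    rw [hφ] at this
    simp only at this
    rw [hh_zero hν, gg_zero] at this
    norm_num at this
    have hggne : gg ν z ≠ 0 := (gg_pos h4).ne'
    field_simp at this
    exact this


lemma integrableOn_aux {a r : ℝ} (ha : 0 < a) (hr : 0 < r) :
    IntegrableOn (fun x : ℝ => x ^ (a-1) * Real.exp (-(r*x))) (Ioi 0) := by
  have h1 : IntegrableOn (fun x : ℝ => Real.exp (-(r*x)) * (r*x)^(a-1)) (Ioi 0) := by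
    have := (integrableOn_Ioi_comp_mul_left_iff
      (fun t : ℝ => Real.exp (-t) * t^(a-1)) 0 hr).2 (by
        simpa using Real.GammaIntegral_convergent ha)
    simpa using this
  have h2 := h1.const_mul ((r^(a-1))⁻¹)
  apply IntegrableOn.congr_fun h2 _ measurableSet_Ioi
  intro x hx
  have hx0 : (0:ℝ) < x := hx
  have hrp : (0:ℝ) < r^(a-1) := Real.rpow_pos_of_pos hr _
  dsimp only
  rw [Real.mul_rpow hr.le hx0.le]
  field_simp

lemma main_pos {ν α s : ℝ} (hν : -1 < ν) (hα : 0 < α) (hαs : α < s) :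
    ∫ x in Set.Ioi (0:ℝ), Real.exp (-s * x) * besselIr ν (α * x) =
      (1 / Real.sqrt (s ^ 2 - α ^ 2)) *
        ((s - Real.sqrt (s ^ 2 - α ^ 2)) / α) ^ ν := by
  have hs : 0 < s := lt_trans hα hαs
  set z : ℝ := α^2/(4*s^2) with hzdef
  have hz0 : 0 ≤ z := by positivity
  have hz4 : z < 1/4 := by
    rw [hzdef, div_lt_div_iff₀ (by positivity) (by norm_num)]
    nlinarith
  have hzabs : |z| < 1/4 := by rwa [abs_of_nonneg hz0]
  set D : ℕ → ℝ := fun m => (Nat.factorial m : ℝ) * Real.Gamma ((m:ℝ)+ν+1) with hD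
  have hDpos : ∀ m, 0 < D m := fun m => by
    have := Real.Gamma_pos_of_pos (arg2_pos hν m)
    have : (0:ℝ) < (Nat.factorial m : ℝ) := by positivity
    exact mul_pos this (Real.Gamma_pos_of_pos (arg2_pos hν m))
  set F : ℕ → ℝ → ℝ := fun m x => Real.exp (-s*x) * ((α*x/2)^(2*(m:ℝ)+ν) / D m) with hF
  -- each term is integrable on Ioi 0
  have hInt : ∀ m : ℕ, Integrable (F m) (volume.restrict (Ioi 0)) := by
    intro m
    have base := (integrableOn_aux (a := 2*(m:ℝ)+ν+1) (arg1_pos hν m) hs).const_mul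
      ((α/2)^(2*(m:ℝ)+ν) / D m)
    apply IntegrableOn.congr_fun base _ measurableSet_Ioi
    intro x hx
    have hx0 : (0:ℝ) < x := hx
    rw [hF]
    simp only
    rw [show α*x/2 = (α/2)*x from by ring, Real.mul_rpow (by positivity) hx0.le,
      show 2*(m:ℝ)+ν+1-1 = 2*(m:ℝ)+ν from by ring, neg_mul]
    ring
  -- value of each integral
  have hVal : ∀ m : ℕ, ∫ x in Ioi (0:ℝ), F m x
      = ((α/2)^(2*(m:ℝ)+ν) / D m) * ((1/s)^(2*(m:ℝ)+ν+1) * Real.Gamma (2*(m:ℝ)+ν+1)) := by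
    intro m
    have congr1 : ∫ x in Ioi (0:ℝ), F m x
        = ∫ x in Ioi (0:ℝ), ((α/2)^(2*(m:ℝ)+ν) / D m) * (x ^ (2*(m:ℝ)+ν+1-1) * Real.exp (-(s*x))) := by
      apply setIntegral_congr_fun measurableSet_Ioi
      intro x hx
      have hx0 : (0:ℝ) < x := hx
      rw [hF]
      simp only
      rw [show α*x/2 = (α/2)*x from by ring, Real.mul_rpow (by positivity) hx0.le,
        show 2*(m:ℝ)+ν+1-1 = 2*(m:ℝ)+ν from by ring, neg_mul]
      ring
    rw [congr1, integral_const_mul, integral_rpow_mul_exp_neg_mul_Ioi (arg1_pos hν m) hs]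
  -- the summand values
  have hVm : ∀ m : ℕ, ((α/2)^(2*(m:ℝ)+ν) / D m) * ((1/s)^(2*(m:ℝ)+ν+1) * Real.Gamma (2*(m:ℝ)+ν+1))
      = ((1/s) * (α/(2*s))^ν) * (cc ν m * z^m) := by
    intro m
    have h1 : (0:ℝ) < α/2 := by positivity
    have h2 : (0:ℝ) < 1/s := by positivity
    have h3 : (0:ℝ) < α/(2*s) := by positivity
    have e1 : ((1:ℝ)/s)^(2*(m:ℝ)+ν+1) = (1/s)^(2*(m:ℝ)+ν) * (1/s) :=
      Real.rpow_add_one h2.ne' _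
    have e2 : (α/2)^(2*(m:ℝ)+ν) * ((1:ℝ)/s)^(2*(m:ℝ)+ν) = (α/(2*s))^(2*(m:ℝ)+ν) := by
      rw [← Real.mul_rpow h1.le h2.le]
      congr 1
      field_simp
    have e3 : (α/(2*s))^(2*(m:ℝ)+ν) = (α/(2*s))^(2*(m:ℝ)) * (α/(2*s))^ν := by
      rw [← Real.rpow_add h3]
    have e4 : (α/(2*s))^(2*(m:ℝ)) = z^m := by
      rw [show 2*(m:ℝ) = ((2*m : ℕ) : ℝ) from by push_cast; ring, Real.rpow_natCast,
        pow_mul]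
      congr 1
      rw [hzdef]
      field_simp
      ring
    have hcc : cc ν m = Real.Gamma (2*(m:ℝ)+ν+1) / D m := rfl
    calc ((α/2)^(2*(m:ℝ)+ν) / D m) * ((1/s)^(2*(m:ℝ)+ν+1) * Real.Gamma (2*(m:ℝ)+ν+1))
        = ((1/s)^(2*(m:ℝ)+ν+1)) * ((α/2)^(2*(m:ℝ)+ν)) * (Real.Gamma (2*(m:ℝ)+ν+1) / D m) := by ring
      _ = ((1/s)^(2*(m:ℝ)+ν) * (1/s)) * ((α/2)^(2*(m:ℝ)+ν)) * (Real.Gamma (2*(m:ℝ)+ν+1) / D m) := by rw [e1]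
      _ = (1/s) * ((α/2)^(2*(m:ℝ)+ν) * (1/s)^(2*(m:ℝ)+ν)) * (Real.Gamma (2*(m:ℝ)+ν+1) / D m) := by ring
      _ = (1/s) * ((α/(2*s))^(2*(m:ℝ)+ν)) * (Real.Gamma (2*(m:ℝ)+ν+1) / D m) := by rw [e2]
      _ = (1/s) * ((α/(2*s))^(2*(m:ℝ)) * (α/(2*s))^ν) * (Real.Gamma (2*(m:ℝ)+ν+1) / D m) := by rw [e3]
      _ = (1/s) * (z^m * (α/(2*s))^ν) * (Real.Gamma (2*(m:ℝ)+ν+1) / D m) := by rw [e4]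
      _ = ((1/s) * (α/(2*s))^ν) * (cc ν m * z^m) := by rw [hcc]; ring
  -- norms equal values (nonnegative integrand)
  have hNorm : ∀ m : ℕ, (∫ x in Ioi (0:ℝ), ‖F m x‖) = ∫ x in Ioi (0:ℝ), F m x := by
    intro m
    apply setIntegral_congr_fun measurableSet_Ioi
    intro x hx
    have hx0 : (0:ℝ) < x := hx
    dsimp only
    rw [norm_of_nonneg]
    have h1 : (0:ℝ) ≤ (α*x/2)^(2*(m:ℝ)+ν) := Real.rpow_nonneg (by positivity) _
    have h2 := (hDpos m).le
    positivity
  have hS2 : Summable (fun m : ℕ => ∫ x in Ioi (0:ℝ), F m x) := by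
    apply Summable.congr ((summable_F0 hν hzabs).mul_left ((1/s)*(α/(2*s))^ν))
    intro m
    rw [hVal m, hVm m]
  have hSum : Summable (fun m : ℕ => ∫ x in Ioi (0:ℝ), ‖F m x‖) := by
    apply Summable.congr hS2
    intro m
    rw [hNorm m]
  -- final algebra setup
  set w : ℝ := Real.sqrt (s^2-α^2) with hw
  have hsa : (0:ℝ) < s^2-α^2 := by nlinarith
  have hw2 : w^2 = s^2-α^2 := Real.sq_sqrt hsa.le
  have hwpos : 0 < w := Real.sqrt_pos.2 hsa
  have hswpos : (0:ℝ) < s + w := by linarith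
  have huu : uu z = w/s := by
    unfold uu
    rw [show 1-4*z = (s^2-α^2)/s^2 from by rw [hzdef]; field_simp,
      Real.sqrt_div hsa.le, Real.sqrt_sq hs.le, hw]
  have hvv : vv z = 2*s/(s+w) := by
    unfold vv
    rw [huu]
    rw [div_eq_div_iff (by positivity) hswpos.ne']
    field_simp
  have hbase : α/(2*s)*(2*s/(s+w)) = (s-w)/α := by
    rw [div_mul_div_comm, div_eq_div_iff (by positivity) hα.ne']
    nlinarith [hw2]
  calc ∫ x in Ioi (0:ℝ), Real.exp (-s * x) * besselIr ν (α * x)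
      = ∫ x in Ioi (0:ℝ), ∑' m : ℕ, F m x := by
        apply setIntegral_congr_fun measurableSet_Ioi
        intro x _
        unfold besselIr
        exact (tsum_mul_left).symm
    _ = ∑' m : ℕ, ∫ x in Ioi (0:ℝ), F m x :=
        (integral_tsum_of_summable_integral_norm hInt hSum).symm
    _ = ∑' m : ℕ, ((1/s)*(α/(2*s))^ν) * (cc ν m * z^m) :=
        tsum_congr (fun m => (hVal m).trans (hVm m))
    _ = ((1/s)*(α/(2*s))^ν) * hh ν z := by rw [tsum_mul_left]; rfl
    _ = ((1/s)*(α/(2*s))^ν) * gg ν z := by rw [key_identity hν hz0 hz4]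
    _ = (1/w) * ((α/(2*s))^ν * (2*s/(s+w))^ν) := by
        unfold gg
        rw [huu, hvv]
        field_simp
    _ = (1/w) * ((s-w)/α)^ν := by
        rw [← Real.mul_rpow (by positivity) (by positivity), hbase]
    _ = (1 / Real.sqrt (s ^ 2 - α ^ 2)) * ((s - Real.sqrt (s ^ 2 - α ^ 2)) / α) ^ ν := by
        rw [← hw]


lemma besselIr_neg {ν y : ℝ} (hν : -1 < ν) (hy : y < 0) :
    besselIr ν y = Real.cos (ν*π) * besselIr ν (-y) := by
  unfold besselIr
  rw [← tsum_mul_left]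
  apply tsum_congr
  intro m
  have hm0 : (0:ℝ) ≤ (m:ℝ) := Nat.cast_nonneg m
  have key : (y/2)^(2*(m:ℝ)+ν) = Real.cos (ν*π) * (-y/2)^(2*(m:ℝ)+ν) := by
    rw [Real.rpow_def_of_neg (by linarith : y/2 < 0)]
    rw [show Real.log (y/2) = Real.log (-y/2) from by
      rw [show y/2 = -(-y/2) from by ring, Real.log_neg_eq_log]]
    rw [← Real.rpow_def_of_pos (by linarith : (0:ℝ) < -y/2)]
    rw [show (2*(m:ℝ)+ν)*π = ν*π + (m:ℤ)*(2*π) from by push_cast; ring,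
      Real.cos_add_int_mul_two_pi]
    ring
  rw [key]
  ring


end BesselAux

open BesselAux in
/-- Laplace transform of `I_ν(αx)`:
`∫₀^∞ e^{-sx} I_ν(αx) dx = (s² - α²)^{-1/2} ((s - √(s² - α²))/α)^ν`
for `ν > -1`, `|α| < s`. -/
theorem besselIr_laplace (ν α s : ℝ) (hν : -1 < ν) (hα : |α| < s) (hs : 0 < s) :
    ∫ x in Set.Ioi (0:ℝ), Real.exp (-s * x) * besselIr ν (α * x) =
      (1 / Real.sqrt (s ^ 2 - α ^ 2)) *
        ((s - Real.sqrt (s ^ 2 - α ^ 2)) / α) ^ ν := by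
  rcases lt_trichotomy α 0 with hneg | hzero | hpos
  · -- α < 0
    have hα' : -α < s := by rwa [abs_of_neg hneg] at hα
    have hmain := main_pos hν (by linarith : (0:ℝ) < -α) hα'
    have hsa : (0:ℝ) < s^2 - α^2 := by nlinarith
    set w : ℝ := Real.sqrt (s^2-α^2) with hw
    have hw2 : w^2 = s^2-α^2 := Real.sq_sqrt hsa.le
    have hwpos : 0 < w := Real.sqrt_pos.2 hsa
    have hws : w < s := by nlinarith
    have hneg2 : (s-w)/α < 0 := div_neg_of_pos_of_neg (by linarith) hneg
    have e1 : ∫ x in Set.Ioi (0:ℝ), Real.exp (-s * x) * besselIr ν (α * x)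
        = Real.cos (ν*π) * ∫ x in Set.Ioi (0:ℝ), Real.exp (-s * x) * besselIr ν ((-α) * x) := by
      rw [← MeasureTheory.integral_const_mul]
      apply setIntegral_congr_fun measurableSet_Ioi
      intro x hx
      have hx0 : (0:ℝ) < x := hx
      dsimp only
      rw [besselIr_neg hν (by nlinarith : α*x < 0), show -(α*x) = (-α)*x from by ring]
      ring
    rw [e1]
    have hsq : s^2 - (-α)^2 = s^2 - α^2 := by ring
    rw [hmain]
    rw [hsq, ← hw]
    rw [Real.rpow_def_of_neg hneg2]
    rw [show Real.log ((s-w)/α) = Real.log ((s-w)/(-α)) from by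
      rw [show (s-w)/α = -((s-w)/(-α)) from by ring, Real.log_neg_eq_log]]
    rw [← Real.rpow_def_of_pos (div_pos (by linarith) (by linarith : (0:ℝ) < -α))]
    ring
  · -- α = 0
    subst hzero
    have hsq : s^2 - 0^2 = s^2 := by ring
    rcases eq_or_ne ν 0 with hν0 | hν0
    · subst hν0
      have hb : besselIr 0 0 = 1 := by
        unfold besselIr
        rw [tsum_eq_single 0 (fun m hm => by
          have : 2*(m:ℝ) + 0 ≠ 0 := by
            have : (0:ℝ) < (m:ℝ) := by
              exact_mod_cast Nat.pos_of_ne_zero hm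
            linarith
          rw [show ((0:ℝ)/2) = 0 from by norm_num, Real.zero_rpow this, zero_div])]
        norm_num [Real.Gamma_one]
      have e2 : ∫ x in Set.Ioi (0:ℝ), Real.exp (-s * x) * besselIr 0 (0 * x)
          = ∫ x in Set.Ioi (0:ℝ), x^((1:ℝ)-1) * Real.exp (-(s*x)) := by
        apply setIntegral_congr_fun measurableSet_Ioi
        intro x hx
        dsimp only
        rw [zero_mul, hb]
        norm_num
      rw [e2, integral_rpow_mul_exp_neg_mul_Ioi one_pos hs]
      rw [hsq, Real.sqrt_sq hs.le]
      norm_num [Real.Gamma_one]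
    · have hb : besselIr ν 0 = 0 := by
        unfold besselIr
        have hterm : ∀ m : ℕ, ((0:ℝ)/2)^(2*(m:ℝ)+ν) / ((Nat.factorial m : ℝ) * Real.Gamma ((m:ℝ)+ν+1)) = 0 := by
          intro m
          have hne : 2*(m:ℝ)+ν ≠ 0 := by
            match m with
            | 0 => simpa using hν0
            | (k+1) =>
              have : (0:ℝ) ≤ (k:ℝ) := Nat.cast_nonneg k
              push_cast
              nlinarith
          rw [show ((0:ℝ)/2) = 0 from by norm_num, Real.zero_rpow hne, zero_div]
        rw [tsum_congr hterm]
        exact tsum_zero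
      have e2 : ∫ x in Set.Ioi (0:ℝ), Real.exp (-s * x) * besselIr ν (0 * x)
          = ∫ (_ : ℝ) in Set.Ioi (0:ℝ), (0:ℝ) := by
        apply setIntegral_congr_fun measurableSet_Ioi
        intro x hx
        dsimp only
        rw [zero_mul, hb, mul_zero]
      rw [e2, integral_zero, hsq, Real.sqrt_sq hs.le]
      rw [sub_self, zero_div, Real.zero_rpow hν0, mul_zero]
  · -- α > 0
    have : α < s := by rwa [abs_of_pos hpos] at hα
    exact main_pos hν hpos this
end

section
/- Let H be Hermitian, R positive definite, G = −iH − R, and 𝒢 = G ⊗ I + I ⊗ conj(G), all n×n complex matrices. Then 𝒢 is Hermitian if and only if H is a real multiple of the identity matrix. -/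
open Matrix Kronecker
open scoped ComplexOrder

/-- Let `H` be Hermitian, `R` positive definite, `G = -iH - R`, and
`𝒢 = G ⊗ I + I ⊗ conj(G)`. Then `𝒢` is Hermitian iff `H` is a real multiple of
the identity. -/
theorem G_hermitian_iff (n : ℕ) (H R : Matrix (Fin n) (Fin n) ℂ)
    (hH : H.IsHermitian) (hR : R.PosDef) (G : Matrix (Fin n) (Fin n) ℂ)
    (hG : G = (-Complex.I) • H - R)
    (𝒢 : Matrix (Fin n × Fin n) (Fin n × Fin n) ℂ)
    (h𝒢 : 𝒢 = G ⊗ₖ (1 : Matrix (Fin n) (Fin n) ℂ)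
        + (1 : Matrix (Fin n) (Fin n) ℂ) ⊗ₖ G.map (starRingEnd ℂ)) :
    𝒢.IsHermitian ↔ ∃ c : ℝ, H = (c : ℂ) • (1 : Matrix (Fin n) (Fin n) ℂ) := by
  have hHa : ∀ i j, (starRingEnd ℂ) (H j i) = H i j := fun i j => hH.apply i j
  have hRa : ∀ i j, (starRingEnd ℂ) (R j i) = R i j := fun i j => hR.1.apply i j
  have hent : ∀ i j k l : Fin n, 𝒢 (i, j) (k, l)
      = ((-Complex.I) * H i k - R i k) * (if j = l then 1 else 0)
        + (if i = k then 1 else 0) * (Complex.I * ((starRingEnd ℂ) (H j l)) - (starRingEnd ℂ) (R j l)) := by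
    intro i j k l
    simp [h𝒢, hG, Matrix.add_apply, Matrix.kroneckerMap_apply, Matrix.one_apply,
      Matrix.sub_apply, Matrix.smul_apply, Matrix.map_apply, map_sub, _root_.map_mul,
      Complex.conj_I, smul_eq_mul, mul_sub, sub_mul]
  have key : 𝒢.IsHermitian ↔ ∀ i k j l : Fin n,
      H i k * (if j = l then (1:ℂ) else 0) = H l j * (if i = k then (1:ℂ) else 0) := by
    constructor
    · intro h i k j l
      have := congrFun (congrFun h.eq (i, j)) (k, l)
      rw [Matrix.conjTranspose_apply] at this
      rw [hent, hent] at this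
      simp only [RCLike.star_def, map_add, _root_.map_mul, map_sub, map_neg, Complex.conj_I,
        MonoidWithZeroHom.map_ite_one_zero, Complex.conj_conj] at this
      rw [hHa i k, hRa i k, hHa l j, hRa l j] at this
      rw [show (if l = j then (1:ℂ) else 0) = (if j = l then 1 else 0) from if_congr eq_comm rfl rfl,
        show (if k = i then (1:ℂ) else 0) = (if i = k then 1 else 0) from if_congr eq_comm rfl rfl] at this
      have h2 : (2*Complex.I) * (H i k * (if j = l then (1:ℂ) else 0))
          = (2*Complex.I) * (H l j * (if i = k then (1:ℂ) else 0)) := by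
        linear_combination this
      exact mul_left_cancel₀ (by simp [Complex.I_ne_zero]) h2
    · intro hk
      refine Matrix.ext fun p q => ?_
      obtain ⟨i, j⟩ := p
      obtain ⟨k, l⟩ := q
      rw [Matrix.conjTranspose_apply]
      rw [hent, hent]
      simp only [RCLike.star_def, map_add, _root_.map_mul, map_sub, map_neg, Complex.conj_I,
        MonoidWithZeroHom.map_ite_one_zero, Complex.conj_conj]
      rw [hHa i k, hRa i k, hHa l j, hRa l j]
      rw [show (if l = j then (1:ℂ) else 0) = (if j = l then 1 else 0) from if_congr eq_comm rfl rfl,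
        show (if k = i then (1:ℂ) else 0) = (if i = k then 1 else 0) from if_congr eq_comm rfl rfl]
      linear_combination (2*Complex.I) * hk i k j l
  rw [key]
  constructor
  · intro P
    rcases Nat.eq_zero_or_pos n with hn | hn
    · subst hn
      exact ⟨0, Matrix.ext fun i _ => i.elim0⟩
    · set z : Fin n := ⟨0, hn⟩
      have hz : ((H z z).re : ℂ) = H z z := by
        have := hHa z z
        rw [Complex.conj_eq_iff_re] at this
        exact this
      refine ⟨(H z z).re, Matrix.ext fun i k => ?_⟩
      have := P i k z z
      simp only [if_true, eq_self_iff_true, mul_one] at this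
      rw [this, Matrix.smul_apply, Matrix.one_apply, hz]
      split_ifs <;> simp
  · rintro ⟨c, rfl⟩ i k j l
    simp only [Matrix.smul_apply, Matrix.one_apply, smul_eq_mul, mul_one, mul_zero]
    rw [show (if l = j then (1:ℂ) else 0) = (if j = l then 1 else 0) from if_congr eq_comm rfl rfl]
    split_ifs <;> ring
end
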